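/- arXiv:2409.03407 — 4 statements merged into one kernel-verified Lean document; each statement's English description precedes it below -/
import Mathlib

section
/- If G is a simple graph on n vertices whose shortest odd cycle has length 2m+1 with m ≥ 2, then every vertex not on this cycle has at most 2 neighbors on the cycle. -/
/-!
If `v` is adjacent to the vertices at positions `i < j` of `C`, the two arcs of `C` between them,
closed up through `v`, are closed walks of lengths `j - i + 2` and `|C| - (j - i) + 2`. One of
them is odd, and an odd closed walk contains an odd cycle no longer than itself, so the odd one
is at least as long as `C`. Hence any two such positions are either two apart or at odd distance
at least `|C| - 2`, and for `|C| ≥ 5` no three positions can pairwise satisfy this.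
-/

namespace SimpleGraph.Walk

variable {V : Type*} {G : SimpleGraph V}

/-- Cutting a closed subwalk out of an odd closed walk leaves two shorter closed walks, one of
them odd; if there is none to cut out, the walk is a cycle. -/
theorem exists_isCycle_odd_length_le {u : V} (w : G.Walk u u) (hw : Odd w.length) :
    ∃ (y : V) (c : G.Walk y y), c.IsCycle ∧ Odd c.length ∧ c.length ≤ w.length := by
  induction hn : w.length using Nat.strong_induction_on generalizing u with
  | _ n ih =>
  subst hn
  cases w with
  | nil => simp at hw
  | cons h p =>
    by_cases hp : p.IsPath
    · refine ⟨u, cons h p, (cons_isCycle_iff p h).mpr ⟨hp, fun he => ?_⟩, hw, le_rfl⟩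
      have := hp.length_eq_one_of_mem_edges (Sym2.eq_swap ▸ he)
      norm_num [this] at hw
    · obtain ⟨z, c, ⟨q, r, rfl⟩, hc⟩ : ∃ (z : V) (c : G.Walk z z), c.IsSubwalk p ∧ ¬c.Nil := by
        simpa using mt isPath_iff_isSubwalk_imp_nil.mpr hp
      have hc0 := not_nil_iff_lt_length.mp hc
      have hlen : (cons h ((q.append c).append r)).length =
          (cons h (q.append r)).length + c.length := by
        simp only [length_cons, length_append]; omega
      rw [hlen] at hw ih ⊢
      rcases Nat.even_or_odd c.length with he | ho
      · obtain ⟨y, c', hc', ho', hle⟩ :=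
          ih (cons h (q.append r)).length (by omega) _ ((Nat.odd_add.mp hw).mpr he) rfl
        exact ⟨y, c', hc', ho', by omega⟩
      · obtain ⟨y, c', hc', ho', hle⟩ := ih c.length (by simp) c ho rfl
        exact ⟨y, c', hc', ho', by omega⟩

lemma exists_walk_getVert_getVert {u w : V} (p : G.Walk u w) {i j : ℕ} (hij : i ≤ j)
    (hj : j ≤ p.length) : ∃ q : G.Walk (p.getVert i) (p.getVert j), q.length = j - i :=
  ⟨((p.drop i).take (j - i)).copy rfl (by rw [drop_getVert]; congr 1; omega), by simp; omega⟩

lemma exists_walk_getVert_getVert_of_closed {u : V} (p : G.Walk u u) {i j : ℕ} (hij : i ≤ j)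
    (hj : j ≤ p.length) :
    ∃ q : G.Walk (p.getVert j) (p.getVert i), q.length = p.length - j + i := by
  obtain ⟨q₁, hq₁⟩ := p.exists_walk_getVert_getVert hj le_rfl
  obtain ⟨q₂, hq₂⟩ := p.exists_walk_getVert_getVert (Nat.zero_le i) (hij.trans hj)
  refine ⟨(q₁.copy rfl p.getVert_length).append (q₂.copy p.getVert_zero rfl), ?_⟩
  simp [hq₁, hq₂]

lemma exists_lt_length_getVert_eq {u w : V} {p : G.Walk u u} (hp : 0 < p.length)
    (hw : w ∈ p.support) : ∃ i < p.length, p.getVert i = w := by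
  obtain ⟨n, rfl, hn⟩ := mem_support_iff_exists_getVert.mp hw
  rcases hn.lt_or_eq with hn | rfl
  · exact ⟨n, hn, rfl⟩
  · exact ⟨0, hp, by simp⟩

lemma le_length_of_odd {u : V} {L : ℕ}
    (hmin : ∀ (y : V) (c : G.Walk y y), c.IsCycle → Odd c.length → L ≤ c.length)
    (w : G.Walk u u) (hw : Odd w.length) : L ≤ w.length :=
  let ⟨y, c, hc, ho, hle⟩ := w.exists_isCycle_odd_length_le hw
  (hmin y c hc ho).trans hle

lemma sub_eq_two_or_of_adj_getVert {u v : V} {C : G.Walk u u} (hC : Odd C.length)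
    (hmin : ∀ (y : V) (c : G.Walk y y), c.IsCycle → Odd c.length → C.length ≤ c.length)
    {i j : ℕ} (hij : i < j) (hj : j ≤ C.length)
    (hvi : G.Adj v (C.getVert i)) (hvj : G.Adj v (C.getVert j)) :
    j - i = 2 ∨ Odd (j - i) ∧ C.length ≤ j - i + 2 := by
  rcases Nat.even_or_odd (j - i) with he | ho
  · obtain ⟨q, hq⟩ := C.exists_walk_getVert_getVert_of_closed hij.le hj
    have hodd : Odd (cons hvj (q.concat hvi.symm)).length := by
      simp only [length_cons, length_concat, hq, Nat.odd_iff, Nat.even_iff] at hC he ⊢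
      omega
    have := le_length_of_odd hmin _ hodd
    simp only [length_cons, length_concat, hq, Nat.even_iff] at this he
    omega
  · obtain ⟨p, hp⟩ := C.exists_walk_getVert_getVert hij.le hj
    have := le_length_of_odd hmin (cons hvi (p.concat hvj.symm))
      (by rw [length_cons, length_concat, hp]; exact ho.add_even even_two)
    simp only [length_cons, length_concat, hp] at this
    exact Or.inr ⟨ho, by omega⟩

end SimpleGraph.Walk

open SimpleGraph

theorem stmt0_general {V : Type*} [DecidableEq V] (G : SimpleGraph V)
    [DecidableRel G.Adj] (m : ℕ) (hm : 2 ≤ m) (x : V) (C : G.Walk x x)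
    (hlen : C.length = 2 * m + 1)
    (hmin : ∀ (y : V) (w : G.Walk y y), w.IsCycle → Odd w.length → C.length ≤ w.length)
    (v : V) :
    (C.support.toFinset.filter (fun u => G.Adj v u)).card ≤ 2 := by
  by_contra! hcard
  obtain ⟨a, b, c, ha, hb, hc, hab, hac, hbc⟩ := Finset.two_lt_card_iff.mp hcard
  simp only [Finset.mem_filter, List.mem_toFinset] at ha hb hc
  obtain ⟨i, hi, rfl⟩ := C.exists_lt_length_getVert_eq (by omega) ha.1
  obtain ⟨j, hj, rfl⟩ := C.exists_lt_length_getVert_eq (by omega) hb.1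
  obtain ⟨k, hk, rfl⟩ := C.exists_lt_length_getVert_eq (by omega) hc.1
  have hpair : ∀ p q, G.Adj v (C.getVert p) → G.Adj v (C.getVert q) → p < q → q < C.length →
      q - p = 2 ∨ (q - p) % 2 = 1 ∧ C.length ≤ q - p + 2 := fun p q hp hq hpq hqC => by
    simpa only [Nat.odd_iff] using
      Walk.sub_eq_two_or_of_adj_getVert (by simp [hlen]) hmin hpq hqC.le hp hq
  have := hpair i j ha.2 hb.2; have := hpair j i hb.2 ha.2
  have := hpair i k ha.2 hc.2; have := hpair k i hc.2 ha.2
  have := hpair j k hb.2 hc.2; have := hpair k j hc.2 hb.2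
  have := mt (congrArg C.getVert) hab; have := mt (congrArg C.getVert) hac
  have := mt (congrArg C.getVert) hbc
  omega

/-- If the shortest odd cycle of `G` has length `2m+1` with `m ≥ 2`, then every vertex
not on this cycle has at most 2 neighbors on the cycle. -/
theorem stmt0 {V : Type*} [Fintype V] [DecidableEq V] (G : SimpleGraph V)
    [DecidableRel G.Adj] (m : ℕ) (hm : 2 ≤ m) (x : V) (C : G.Walk x x)
    (hC : C.IsCycle) (hlen : C.length = 2 * m + 1)
    (hmin : ∀ (y : V) (w : G.Walk y y), w.IsCycle → Odd w.length → C.length ≤ w.length)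
    (v : V) (hv : v ∉ C.support) :
    (C.support.toFinset.filter (fun u => G.Adj v u)).card ≤ 2 :=
  stmt0_general G m hm x C hlen hmin v
end

section
/- If G is a non-bipartite C_{2k+1}-free simple graph on n vertices with minimum degree at least n/(2r+2) (where r ≥ 2), then G contains an odd cycle of length at most 2(2r+1)+1 = 4r+3. -/
/-!
Take a shortest odd closed walk `C`, of length `g`; it exists because `G` is not bipartite. It is a
cycle, since a repeated vertex would split it into two shorter closed walks, one of them odd. If
`g ≥ 5`, no vertex `v` has three neighbours on `C`: they would cut `C` into three arcs, an odd arc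
closed up through `v` is an odd closed walk, so that arc has length at least `g - 2`, and then the
other two arcs have length `1`, which is odd again. Counting edges between `C` and `V(G)` gives
`g · n / (2r + 2) ≤ 2n`, so `g ≤ 4r + 4`, and `g` is odd.
-/
open SimpleGraph Finset

namespace SimpleGraph

variable {V : Type*} {G : SimpleGraph V}

namespace Walk

lemma exists_closed_subwalk_of_two_le_count [DecidableEq V] {a b x : V} (p : G.Walk a b)
    (hx : 2 ≤ p.support.count x) :
    ∃ (c : G.Walk x x) (q : G.Walk a b), c.length ≠ 0 ∧ c.length + q.length = p.length := by
  have hxp : x ∈ p.support := List.count_pos_iff.mp (by omega)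
  set d := p.dropUntil x hxp
  have hcount : p.support.count x = 1 + d.support.tail.count x := by
    rw [← p.count_support_takeUntil_eq_one hxp, ← List.count_append, ← support_append,
      p.take_spec hxp]
  cases hd : d with
  | nil => simp [hd] at hcount; omega
  | @cons _ y _ h d' =>
    have hxd' : x ∈ d'.support := List.count_pos_iff.mp (by simp [hd] at hcount; omega)
    refine ⟨cons h (d'.takeUntil x hxd'), (p.takeUntil x hxp).append (d'.dropUntil x hxd'),
      by simp, ?_⟩
    have hp : (p.takeUntil x hxp).length + d.length = p.length := by
      rw [← length_append, p.take_spec hxp]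
    have hd' : (d'.takeUntil x hxd').length + (d'.dropUntil x hxd').length = d'.length := by
      rw [← length_append, d'.take_spec hxd']
    simp only [length_cons, length_append, hd] at hp ⊢
    omega

lemma length_ne_one {u : V} (w : G.Walk u u) : w.length ≠ 1 :=
  fun h => G.loopless.irrefl u (adj_of_length_eq_one h)

lemma isCycle_of_forall_odd_length_le {u : V} (w : G.Walk u u) (hodd : Odd w.length)
    (hmin : ∀ (v : V) (c : G.Walk v v), Odd c.length → w.length ≤ c.length) : w.IsCycle := by
  classical
  cases w with
  | nil => simp at hodd
  | @cons _ z _ h t =>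
    rw [isCycle_iff_isPath_tail_and_le_length]
    simp only [getVert_cons_succ, tail_cons, isPath_copy, length_cons] at hodd hmin ⊢
    refine ⟨?_, ?_⟩
    · rw [isPath_def, List.nodup_iff_count_le_one]
      by_contra! ⟨x, hx⟩
      obtain ⟨c, q, hc, hcq⟩ := t.exists_closed_subwalk_of_two_le_count hx
      rcases Nat.even_or_odd c.length with hce | hco
      · have := hmin u (cons h q) (by simp only [length_cons]; grind)
        simp only [length_cons] at this
        omega
      · have := hmin x c hco
        omega
    · have := (cons h t).length_ne_one
      rcases hodd with ⟨m, hm⟩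
      simp only [length_cons] at this
      omega

lemma le_length_add_two_of_odd {g : ℕ}
    (hmin : ∀ (x : V) (c : G.Walk x x), Odd c.length → g ≤ c.length) {v a b : V}
    (ha : G.Adj v a) (hb : G.Adj v b) (p : G.Walk a b) (hp : Odd p.length) :
    g ≤ p.length + 2 := by
  have hodd : Odd (cons ha (p.concat hb.symm)).length := by
    simpa [length_concat, add_assoc] using hp.add_even even_two
  simpa [length_concat] using hmin v _ hodd

lemma false_of_three_adj_of_arcs {g : ℕ}
    (hmin : ∀ (x : V) (c : G.Walk x x), Odd c.length → g ≤ c.length) (hg : Odd g) (hg5 : 5 ≤ g)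
    {v a b c : V} (hab : a ≠ b) (hbc : b ≠ c) (hca : c ≠ a)
    (ha : G.Adj v a) (hb : G.Adj v b) (hc : G.Adj v c)
    (p : G.Walk a b) (q : G.Walk b c) (s : G.Walk c a)
    (hsum : p.length + q.length + s.length = g) : False := by
  have arc {x y : V} (hx : G.Adj v x) (hy : G.Adj v y) (r : G.Walk x y) (hxy : x ≠ y) :
      r.length ≠ 0 ∧ (r.length % 2 = 0 ∨ g ≤ r.length + 2) :=
    ⟨fun h => hxy (eq_of_length_eq_zero h), (Nat.even_or_odd r.length).imp Nat.even_iff.mp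
      (le_length_add_two_of_odd hmin hx hy r)⟩
  have := arc ha hb p hab
  have := arc hb hc q hbc
  have := arc hc ha s hca
  have := Nat.odd_iff.mp hg
  omega

lemma card_filter_adj_le_two [DecidableEq V] [DecidableRel G.Adj] {u : V} (w : G.Walk u u)
    (hodd : Odd w.length) (hg5 : 5 ≤ w.length)
    (hmin : ∀ (x : V) (c : G.Walk x x), Odd c.length → w.length ≤ c.length) (v : V) :
    #{a ∈ w.support.toFinset | G.Adj a v} ≤ 2 := by
  by_contra! h
  obtain ⟨a, ha, b, hb, c, hc, hab, hac, hbc⟩ := Finset.two_lt_card.mp h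
  simp only [Finset.mem_filter, List.mem_toFinset] at ha hb hc
  set w' := w.rotate a ha.1
  have hlen : w'.length = w.length := length_rotate ..
  rw [← hlen] at hodd hg5 hmin
  have hb' : b ∈ w'.support := (mem_support_rotate_iff ..).mpr hb.1
  have hc' : c ∈ w'.support := (mem_support_rotate_iff ..).mpr hc.1
  rw [← w'.take_spec hb', mem_support_append_iff] at hc'
  have hsplit {x y z : V} (r : G.Walk x z) (hy : y ∈ r.support) :
      (r.takeUntil y hy).length + (r.dropUntil y hy).length = r.length := by
    rw [← length_append, r.take_spec hy]
  have hw' := hsplit w' hb'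
  rcases hc' with hc' | hc'
  · have := hsplit _ hc'
    exact false_of_three_adj_of_arcs hmin hodd hg5 hac (Ne.symm hbc) (Ne.symm hab) ha.2.symm
      hc.2.symm hb.2.symm ((w'.takeUntil b hb').takeUntil c hc')
      ((w'.takeUntil b hb').dropUntil c hc')
      (w'.dropUntil b hb') (by omega)
  · have := hsplit _ hc'
    exact false_of_three_adj_of_arcs hmin hodd hg5 hab hbc (Ne.symm hac) ha.2.symm hb.2.symm
      hc.2.symm (w'.takeUntil b hb') ((w'.dropUntil b hb').takeUntil c hc')
      ((w'.dropUntil b hb').dropUntil c hc') (by omega)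

lemma IsCycle.card_support_toFinset [DecidableEq V] {u : V} {w : G.Walk u u} (hw : w.IsCycle) :
    #w.support.toFinset = w.length := by
  rw [← cons_tail_support, List.toFinset_cons,
    insert_eq_of_mem (List.mem_toFinset.mpr (end_mem_tail_support hw.not_nil)),
    List.toFinset_card_of_nodup hw.support_nodup, List.length_tail, length_support]
  rfl

end Walk

lemma exists_odd_closed_walk_forall_odd_length_le (h : ¬ G.Colorable 2) :
    ∃ (u : V) (w : G.Walk u u), Odd w.length ∧
      ∀ (x : V) (c : G.Walk x x), Odd c.length → w.length ≤ c.length := by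
  classical
  have hex : ∃ m, ∃ (u : V) (w : G.Walk u u), Odd w.length ∧ w.length = m := by
    simp only [two_colorable_iff_forall_loop_even, not_forall, Nat.not_even_iff_odd] at h
    obtain ⟨u, w, hw⟩ := h
    exact ⟨_, u, w, hw, rfl⟩
  obtain ⟨u, w, hodd, hlen⟩ := Nat.find_spec hex
  exact ⟨u, w, hodd, fun x c hc => hlen ▸ Nat.find_min' hex ⟨x, c, hc, rfl⟩⟩

lemma ncard_neighborSet_eq_degree [Fintype V] [DecidableRel G.Adj] (v : V) :
    (G.neighborSet v).ncard = G.degree v := by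
  rw [← Nat.card_coe_set_eq, Nat.card_eq_fintype_card, card_neighborSet_eq_degree]

end SimpleGraph

theorem stmt1_general {V : Type*} [Fintype V] (G : SimpleGraph V) (r n : ℕ)
    (hn : Fintype.card V = n)
    (hnb : ¬ G.Colorable 2)
    (hdeg : ∀ v : V, (n : ℚ) / (2 * r + 2) ≤ ((G.neighborSet v).ncard : ℚ)) :
    ∃ (x : V) (w : G.Walk x x), w.IsCycle ∧ Odd w.length ∧ w.length ≤ 4 * r + 3 := by
  classical
  obtain ⟨u, w, hodd, hmin⟩ := G.exists_odd_closed_walk_forall_odd_length_le hnb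
  have hcyc := w.isCycle_of_forall_odd_length_le hodd hmin
  refine ⟨u, w, hcyc, hodd, ?_⟩
  by_contra! hlong
  have hg5 : 5 ≤ w.length := by obtain ⟨m, hm⟩ := hodd; omega
  have hcount := card_nsmul_le_card_nsmul (s := w.support.toFinset) (t := univ) G.Adj
    (m := (n : ℚ) / (2 * r + 2)) (n := 2)
    (fun a _ => by
      rw [bipartiteAbove, ← neighborFinset_eq_filter, card_neighborFinset_eq_degree,
        ← ncard_neighborSet_eq_degree]
      exact hdeg a)
    (fun v _ => by exact_mod_cast w.card_filter_adj_le_two hodd hg5 hmin v)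
  rw [hcyc.card_support_toFinset, card_univ, hn, nsmul_eq_mul, nsmul_eq_mul] at hcount
  have hnpos : (0 : ℚ) < n := by rw [← hn]; exact_mod_cast Fintype.card_pos_iff.mpr ⟨u⟩
  have : (w.length : ℚ) ≤ 4 * r + 4 := by
    rw [mul_div_assoc', div_le_iff₀ (by positivity)] at hcount
    nlinarith
  have : w.length ≤ 4 * r + 4 := by exact_mod_cast this
  obtain ⟨m, hm⟩ := hodd
  omega

/-- A non-bipartite `C_{2k+1}`-free graph on `n` vertices with minimum degree at least
`n/(2r+2)` (`r ≥ 2`) contains an odd cycle of length at most `4r+3`. -/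
theorem stmt1 {V : Type*} [Fintype V] (G : SimpleGraph V) (r k n : ℕ)
    (hr : 2 ≤ r) (hk : 1 ≤ k) (hn : Fintype.card V = n)
    (hfree : ∀ (x : V) (w : G.Walk x x), w.IsCycle → w.length ≠ 2 * k + 1)
    (hnb : ¬ G.Colorable 2)
    (hdeg : ∀ v : V, (n : ℚ) / (2 * r + 2) ≤ ((G.neighborSet v).ncard : ℚ)) :
    ∃ (x : V) (w : G.Walk x x), w.IsCycle ∧ Odd w.length ∧ w.length ≤ 4 * r + 3 :=
  stmt1_general G r n hn hnb hdeg
end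

section
/- Let r ≥ 3, k ≥ 3r+4, and n ≥ 108(r+1)^r k. If G is an n-vertex C_{2k+1}-free graph with minimum degree at least n/(2r+2), then for any path P from x to y with an even number of vertices, of order at most 2k, the set of common neighbors of x and y outside V(P) has size at most 15r. -/
open SimpleGraph Finset

/-! Downward induction on the order of the path. A path of order `2k` has no common neighbour
of its ends outside it, since such a vertex closes a cycle of length `2k + 1`. For a shorter
path `P` from `x` to `y`, suppose `15r + 1` common neighbours of `x` and `y` lie off `P`.
Double counting with Cauchy–Schwarz and the minimum degree give two of them, `z₁` and `z₂`, with
more than `2k + 15r` common neighbours; the path `z₁ x P y z₂` is two vertices longer, yet more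
than `15r` common neighbours of its ends lie off it, contradicting the induction hypothesis. -/

lemma Nat.sub_mul_le_of_sq_le {n D s b c : ℕ} (hD : s * n ≤ b * D)
    (hsq : D ^ 2 ≤ n * (D + s * (s * c))) : (s - b) * n ≤ b ^ 2 * s * c := by
  obtain hsb | hbs := le_total s b
  · simp [Nat.sub_eq_zero_of_le hsb]
  obtain ⟨e, rfl⟩ := Nat.exists_eq_add_of_le hbs
  rw [Nat.add_sub_cancel_left]
  -- `b D ≥ s n` enters twice: `D (D - n) ≥ (s n / b) (s n / b - n) = n² s (s - b) / b²`.
  rcases Nat.eq_zero_or_pos (e * n) with hen0 | hen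
  · simp [hen0]
  have hbD : e * n * ((b + e) * n) ≤ e * n * (b * D) := Nat.mul_le_mul_left _ hD
  have hsqb : e * n * (b * D) ≤ b ^ 2 * (b + e) * c * ((b + e) * n) := by
    nlinarith [Nat.mul_le_mul_left (b ^ 2) hsq, Nat.mul_le_mul_left (b * D) hD]
  obtain ⟨he, hn⟩ := CanonicallyOrderedAdd.mul_pos.mp hen
  exact Nat.le_of_mul_le_mul_right (hbD.trans hsqb) (by positivity)

lemma sq_mul_lt_sub_mul {r k n : ℕ} (hr : 3 ≤ r) (hk : 3 * r + 4 ≤ k)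
    (hn : 108 * (r + 1) ^ r * k ≤ n) :
    (2 * r + 2) ^ 2 * (15 * r + 1) * (2 * k + 15 * r) < (15 * r + 1 - (2 * r + 2)) * n := by
  have hpow : (r + 1) ^ 3 ≤ (r + 1) ^ r := Nat.pow_le_pow_right (by omega) hr
  have hk0 : 0 < k := by omega
  rw [show 15 * r + 1 - (2 * r + 2) = 13 * r - 1 by omega]
  have hfactor : 28 * (15 * r + 1) < 108 * (13 * r - 1) * (r + 1) :=
    calc 28 * (15 * r + 1) < 108 * (13 * r - 1) * 4 := by omega
      _ ≤ 108 * (13 * r - 1) * (r + 1) := by gcongr; omega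
  calc (2 * r + 2) ^ 2 * (15 * r + 1) * (2 * k + 15 * r)
      = 4 * (r + 1) ^ 2 * (15 * r + 1) * (2 * k + 15 * r) := by ring
    _ ≤ 4 * (r + 1) ^ 2 * (15 * r + 1) * (7 * k) := by gcongr; omega
    _ = (r + 1) ^ 2 * k * (28 * (15 * r + 1)) := by ring
    _ < (r + 1) ^ 2 * k * (108 * (13 * r - 1) * (r + 1)) :=
      Nat.mul_lt_mul_of_pos_left hfactor (by positivity)
    _ = (13 * r - 1) * (108 * (r + 1) ^ 3 * k) := by ring
    _ ≤ (13 * r - 1) * n := by gcongr; exact le_trans (by gcongr) hn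

namespace SimpleGraph

variable {V : Type*} {G : SimpleGraph V}

lemma Walk.IsPath.isCycle_cons_concat {x y z : V} {P : G.Walk x y} (hP : P.IsPath)
    (hxy : x ≠ y) (hz : z ∉ P.support) (hyz : G.Adj y z) (hzx : G.Adj z x) :
    (Walk.cons hzx (P.concat hyz)).IsCycle := by
  refine (Walk.cons_isCycle_iff _ _).2 ⟨hP.concat hz hyz, fun he => ?_⟩
  rw [Walk.edges_concat, List.concat_eq_append, List.mem_append, List.mem_singleton] at he
  rcases he with he | he
  · exact hz (P.fst_mem_support_of_mem_edges he)
  · aesop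

variable [Fintype V] [DecidableRel G.Adj]

lemma sum_card_filter_adj_eq_sum_degree (S : Finset V) :
    ∑ w, #{z ∈ S | G.Adj z w} = ∑ z ∈ S, G.degree z := by
  refine (sum_card_bipartiteAbove_eq_sum_card_bipartiteBelow (r := G.Adj)).symm.trans
    (sum_congr rfl fun z _ => ?_)
  rw [← card_neighborFinset_eq_degree, neighborFinset_eq_filter]
  rfl

variable [DecidableEq V]

lemma Walk.IsPath.neighborFinset_inter_subset_support {x y : V} {P : G.Walk x y}
    (hP : P.IsPath) (hxy : x ≠ y)
    (hfree : ∀ (u : V) (w : G.Walk u u), w.IsCycle → w.length ≠ P.length + 2) :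
    G.neighborFinset x ∩ G.neighborFinset y ⊆ P.support.toFinset := by
  intro z hz
  rw [mem_inter, mem_neighborFinset, mem_neighborFinset] at hz
  by_contra hzP
  refine hfree z _ (hP.isCycle_cons_concat hxy (by simpa using hzP) hz.2 hz.1.symm) ?_
  simp

lemma sum_sq_card_filter_adj_eq (S : Finset V) :
    ∑ w, #{z ∈ S | G.Adj z w} ^ 2 =
      ∑ z₁ ∈ S, ∑ z₂ ∈ S, #(G.neighborFinset z₁ ∩ G.neighborFinset z₂) := by
  have hsq : ∀ w, #{z ∈ S | G.Adj z w} ^ 2 =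
      #{p ∈ S ×ˢ S | G.Adj p.1 w ∧ G.Adj p.2 w} := by
    intro w
    rw [sq, ← card_product, ← filter_product]
  simp_rw [hsq]
  refine (sum_card_bipartiteAbove_eq_sum_card_bipartiteBelow
    (r := fun (p : V × V) w => G.Adj p.1 w ∧ G.Adj p.2 w)).symm.trans ?_
  rw [sum_product]
  refine sum_congr rfl fun z₁ _ => sum_congr rfl fun z₂ _ => ?_
  rw [neighborFinset_eq_filter, neighborFinset_eq_filter, ← filter_and]
  rfl

lemma sum_sq_card_filter_adj_le (S : Finset V) {c : ℕ}
    (hc : ∀ z₁ ∈ S, ∀ z₂ ∈ S, z₁ ≠ z₂ → #(G.neighborFinset z₁ ∩ G.neighborFinset z₂) ≤ c) :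
    ∑ w, #{z ∈ S | G.Adj z w} ^ 2 ≤ ∑ z ∈ S, G.degree z + #S * (#S * c) := by
  rw [sum_sq_card_filter_adj_eq, ← smul_eq_mul, ← sum_const, ← sum_add_distrib]
  refine sum_le_sum fun z₁ hz₁ => ?_
  rw [← add_sum_erase S _ hz₁, inter_self, card_neighborFinset_eq_degree]
  have hrest : ∑ z₂ ∈ S.erase z₁, #(G.neighborFinset z₁ ∩ G.neighborFinset z₂) ≤ #S * c :=
    calc _ ≤ #(S.erase z₁) • c := sum_le_card_nsmul _ _ _ fun z₂ hz₂ =>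
            hc z₁ hz₁ z₂ (mem_of_mem_erase hz₂) (ne_of_mem_erase hz₂).symm
      _ ≤ #S * c := Nat.mul_le_mul_right c (card_erase_le)
  omega

lemma sq_sum_degree_le (S : Finset V) {c : ℕ}
    (hc : ∀ z₁ ∈ S, ∀ z₂ ∈ S, z₁ ≠ z₂ → #(G.neighborFinset z₁ ∩ G.neighborFinset z₂) ≤ c) :
    (∑ z ∈ S, G.degree z) ^ 2 ≤ Fintype.card V * (∑ z ∈ S, G.degree z + #S * (#S * c)) := by
  rw [← sum_card_filter_adj_eq_sum_degree]
  calc _ ≤ #(univ : Finset V) * ∑ w, #{z ∈ S | G.Adj z w} ^ 2 := sq_sum_le_card_mul_sum_sq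
    _ ≤ _ := by
      rw [card_univ, sum_card_filter_adj_eq_sum_degree]
      exact Nat.mul_le_mul_left _ (sum_sq_card_filter_adj_le S hc)

theorem exists_ne_lt_card_neighborFinset_inter (S : Finset V) {b c : ℕ}
    (hdeg : ∀ z ∈ S, Fintype.card V ≤ b * G.degree z)
    (hS : b ^ 2 * #S * c < (#S - b) * Fintype.card V) :
    ∃ z₁ ∈ S, ∃ z₂ ∈ S, z₁ ≠ z₂ ∧ c < #(G.neighborFinset z₁ ∩ G.neighborFinset z₂) := by
  by_contra! hc
  have hD : #S * Fintype.card V ≤ b * ∑ z ∈ S, G.degree z := by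
    rw [mul_sum, ← smul_eq_mul, ← sum_const]
    exact sum_le_sum hdeg
  exact (Nat.sub_mul_le_of_sq_le hD (sq_sum_degree_le S hc)).not_gt hS

theorem Walk.IsPath.card_neighborFinset_inter_sdiff_support_le {k m : ℕ}
    (hfree : ∀ (u : V) (w : G.Walk u u), w.IsCycle → w.length ≠ 2 * k + 1)
    (hpair : ∀ S : Finset V, #S = m + 1 →
      ∃ z₁ ∈ S, ∃ z₂ ∈ S, z₁ ≠ z₂ ∧ 2 * k + m < #(G.neighborFinset z₁ ∩ G.neighborFinset z₂))
    {x y : V} {P : G.Walk x y} (hP : P.IsPath) (heven : Even (P.length + 1))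
    (hle : P.length + 1 ≤ 2 * k) :
    #((G.neighborFinset x ∩ G.neighborFinset y) \ P.support.toFinset) ≤ m := by
  obtain ⟨t, ht⟩ : ∃ t, P.length + 1 + 2 * t = 2 * k := by
    obtain ⟨j, hj⟩ := heven
    exact ⟨k - j, by omega⟩
  clear heven hle
  induction t generalizing x y with
  | zero =>
    have hxy : x ≠ y := by
      rintro rfl
      rw [(Walk.isPath_iff_nil.mp hP).eq_nil, Walk.length_nil] at ht
      omega
    have hsub := hP.neighborFinset_inter_subset_support hxy fun u w hw => by
      have := hfree u w hw
      omega
    simp [sdiff_eq_empty_iff_subset.mpr hsub]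
  | succ t ih =>
    by_contra! hbig
    obtain ⟨S, hSsub, hS⟩ := exists_subset_card_eq hbig
    obtain ⟨z₁, hz₁, z₂, hz₂, hne, hcodeg⟩ := hpair S hS
    simp only [subset_iff, mem_sdiff, mem_inter, mem_neighborFinset, List.mem_toFinset] at hSsub
    obtain ⟨⟨hxz₁, -⟩, hz₁P⟩ := hSsub hz₁
    obtain ⟨⟨-, hyz₂⟩, hz₂P⟩ := hSsub hz₂
    set P' := Walk.cons hxz₁.symm (P.concat hyz₂)
    have hP' : P'.IsPath := (hP.concat hz₂P hyz₂).cons (by simp [hz₁P, hne])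
    have hlen : P'.length = P.length + 2 := by simp [P']
    have hfew := ih hP' (by omega)
    have hsupp : #P'.support.toFinset ≤ 2 * k :=
      (List.toFinset_card_le _).trans (by rw [Walk.length_support]; omega)
    have := le_card_sdiff P'.support.toFinset (G.neighborFinset z₁ ∩ G.neighborFinset z₂)
    omega

end SimpleGraph

/-- Lemma 3.1: under the degree conditions, for any even path `P` from `x` to `y` of order
at most `2k` in a `C_{2k+1}`-free graph, `|(N(x) ∩ N(y)) \ V(P)| ≤ 15r`. -/
theorem stmt2 {V : Type*} [Fintype V] (G : SimpleGraph V) (r k n : ℕ)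
    (hr : 3 ≤ r) (hk : 3 * r + 4 ≤ k) (hn : 108 * (r + 1) ^ r * k ≤ n)
    (hcard : Fintype.card V = n)
    (hfree : ∀ (x : V) (w : G.Walk x x), w.IsCycle → w.length ≠ 2 * k + 1)
    (hdeg : ∀ v : V, (n : ℚ) / (2 * r + 2) ≤ ((G.neighborSet v).ncard : ℚ))
    (x y : V) (P : G.Walk x y) (hP : P.IsPath)
    (heven : Even (P.length + 1)) (hle : P.length + 1 ≤ 2 * k) :
    ((G.neighborSet x ∩ G.neighborSet y) \ {v | v ∈ P.support}).ncard ≤ 15 * r := by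
  classical
  have hmindeg : ∀ v, Fintype.card V ≤ (2 * r + 2) * G.degree v := by
    intro v
    have h := hdeg v
    rw [← coe_neighborFinset, Set.ncard_coe_finset, card_neighborFinset_eq_degree,
      div_le_iff₀ (by positivity)] at h
    rw [hcard]
    exact_mod_cast h.trans_eq (mul_comm _ _)
  have hpair : ∀ S : Finset V, #S = 15 * r + 1 → ∃ z₁ ∈ S, ∃ z₂ ∈ S, z₁ ≠ z₂ ∧
      2 * k + 15 * r < #(G.neighborFinset z₁ ∩ G.neighborFinset z₂) := fun S hS =>
    exists_ne_lt_card_neighborFinset_inter S (fun z _ => hmindeg z)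
      (by rw [hS, hcard]; exact sq_mul_lt_sub_mul hr hk hn)
  have hset : (G.neighborSet x ∩ G.neighborSet y) \ {v | v ∈ P.support} =
      ↑((G.neighborFinset x ∩ G.neighborFinset y) \ P.support.toFinset) := by
    ext; simp
  rw [hset, Set.ncard_coe_finset]
  exact hP.card_neighborFinset_inter_sdiff_support_le hfree hpair heven hle
end

section
/- The graph BC_{2p+1}(n) (2p+1 disjoint copies of K_{m,m}, m = n/(2(2p+1)), with one vertex selected in each copy forming a cycle of length 2p+1) has minimum degree n/(2(2p+1)), is non-bipartite, and contains no odd cycle of length other than 2p+1; in particular it is C_{2q+1}-free for every q ≠ p. -/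
/-!
Weight a dart `+1` or `-1` if it runs forwards or backwards along the hub cycle of selected
vertices, and `0` otherwise. The total weight of a closed walk (its winding number) telescopes
the copy index, so it is `≡ 0 mod 2p+1`; and it is `≡` the length `mod 2`, since every other
edge switches sides of a `K_{m+1,m+1}` while hub edges do not. So an odd cycle winds at least
`2p+1` times, and being a trail it then uses all `2p+1` hub edges. Every hub vertex then already
has both of its cycle-neighbours on the hub cycle, so the cycle never leaves it and has length
`2p+1`. The hub cycle itself is the image of `cycleGraph (2p+1)`, which is not bipartite.
-/

open SimpleGraph

/-- `BC p m` is the graph `BC_{2p+1}(n)` on `n = 2(2p+1)(m+1)` vertices: `2p+1` vertex-disjoint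
copies of `K_{m+1,m+1}` with one selected vertex `(i, Sum.inl none)` in each copy, the selected
vertices forming a cycle of length `2p+1`. -/
def BC (p m : ℕ) : SimpleGraph (ZMod (2 * p + 1) × (Option (Fin m) ⊕ Fin (m + 1))) :=
  SimpleGraph.fromRel (fun q q' =>
    (q.1 = q'.1 ∧ q.2.isLeft ∧ q'.2.isRight) ∨
    (q.1 + 1 = q'.1 ∧ q.2 = Sum.inl none ∧ q'.2 = Sum.inl none))

namespace SimpleGraph.Walk

variable {V : Type*} {G : SimpleGraph V} {u v : V}

theorem sum_map_darts_eq_sub {A : Type*} [AddCommGroup A] {f : G.Dart → A} (g : V → A)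
    (hf : ∀ d, f d = g d.snd - g d.fst) (w : G.Walk u v) :
    (w.darts.map f).sum = g v - g u := by
  induction w with
  | nil => simp
  | cons h w ih =>
    rw [darts_cons, List.map_cons, List.sum_cons, ih, hf]
    abel

theorem forall_mem_support_of_edges {P : V → Prop} (w : G.Walk u v)
    (hP : ∀ x y, s(x, y) ∈ w.edges → P x → P y) {z : V} (hz : z ∈ w.support) (hPz : P z) :
    ∀ x ∈ w.support, P x := by
  induction w generalizing z with
  | nil => simp_all
  | @cons a b c h w ih =>
    have hPw : ∀ x y, s(x, y) ∈ w.edges → P x → P y := fun x y hxy => hP x y (by simp [hxy])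
    have hab : P a ↔ P b := ⟨hP a b (by simp), hP b a (by simp [Sym2.eq_swap])⟩
    simp only [support_cons, List.mem_cons, forall_eq_or_imp] at hz ⊢
    rcases hz with rfl | hz
    · exact ⟨hPz, ih hPw w.start_mem_support (hab.mp hPz)⟩
    · have hw := ih hPw hz hPz
      exact ⟨hab.mpr (hw b w.start_mem_support), hw⟩

end SimpleGraph.Walk

namespace BC

variable {p m : ℕ}

abbrev Vertex (p m : ℕ) := ZMod (2 * p + 1) × (Option (Fin m) ⊕ Fin (m + 1))

def hub (i : ZMod (2 * p + 1)) : Vertex p m := (i, Sum.inl none)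

abbrev IsHub (v : Vertex p m) : Prop := v.2 = Sum.inl none

def side (v : Vertex p m) : ZMod 2 := if v.2.isRight then 1 else 0

lemma two_ne_zero_of_one_le (hp : 1 ≤ p) : (2 : ZMod (2 * p + 1)) ≠ 0 := fun h => by
  have := ZMod.val_ofNat_of_lt (n := 2 * p + 1) (a := 2) (by omega)
  rw [h, ZMod.val_zero] at this
  exact absurd this (by norm_num)

lemma adj_hub_add_one (hp : 1 ≤ p) (i : ZMod (2 * p + 1)) :
    (BC p m).Adj (hub i) (hub (i + 1)) := by
  have : Fact (1 < 2 * p + 1) := ⟨by omega⟩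
  exact ⟨fun h => by simp [hub] at h, Or.inl (Or.inr ⟨rfl, rfl, rfl⟩)⟩

lemma adj_inl_inr (i : ZMod (2 * p + 1)) (x : Option (Fin m)) (y : Fin (m + 1)) :
    (BC p m).Adj (i, Sum.inl x) (i, Sum.inr y) := by
  simp [BC]

lemma adj_cases {u v : Vertex p m} (h : (BC p m).Adj u v) :
    (u.1 = v.1 ∧ side u ≠ side v) ∨
    (IsHub u ∧ IsHub v ∧ (u.1 + 1 = v.1 ∨ v.1 + 1 = u.1)) := by
  obtain ⟨i, x | x⟩ := u <;> obtain ⟨j, y | y⟩ := v <;>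
    simp [BC, side] at h ⊢ <;> grind

lemma ncard_neighborSet_inr (i : ZMod (2 * p + 1)) (y : Fin (m + 1)) :
    ((BC p m).neighborSet (i, Sum.inr y)).ncard = m + 1 := by
  have : (BC p m).neighborSet (i, Sum.inr y) = Set.range fun x => (i, Sum.inl x) := by
    ext ⟨j, x | x⟩ <;> simp [BC, eq_comm (a := j)]
  rw [this, Set.ncard_range_of_injective fun a b h => by simpa using h]
  simp

lemma le_ncard_neighborSet (v : Vertex p m) : m + 1 ≤ ((BC p m).neighborSet v).ncard := by
  obtain ⟨i, x | y⟩ := v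
  · have hsub : (Set.range fun y => (i, Sum.inr y)) ⊆ (BC p m).neighborSet (i, Sum.inl x) := by
      rintro _ ⟨y, rfl⟩
      exact adj_inl_inr i x y
    calc m + 1 = (Set.range fun y : Fin (m + 1) => ((i, Sum.inr y) : Vertex p m)).ncard := by
          rw [Set.ncard_range_of_injective fun a b h => by simpa using h]
          simp
      _ ≤ _ := Set.ncard_le_ncard hsub
  · exact (ncard_neighborSet_inr i y).ge

def cycleGraphHom (hp : 1 ≤ p) : cycleGraph (2 * p + 1) →g BC p m where
  toFun i := hub i
  map_rel' {u v} h := by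
    have val_eq_one : ∀ a : ZMod (2 * p + 1), a.val = 1 → a = 1 :=
      fun a => (ZMod.val_eq_one (by omega) a).mp
    rcases cycleGraph_adj'.mp h with h | h
    · rw [sub_eq_iff_eq_add'.mp (val_eq_one _ h)]
      exact (adj_hub_add_one hp v).symm
    · rw [sub_eq_iff_eq_add'.mp (val_eq_one _ h)]
      exact adj_hub_add_one hp u

lemma not_colorable_two (hp : 1 ≤ p) : ¬ (BC p m).Colorable 2 := fun h => by
  have h3 := chromaticNumber_cycleGraph_of_odd (2 * p + 1) (by omega) (odd_two_mul_add_one p)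
  have h2 := (h.of_hom (cycleGraphHom hp)).chromaticNumber_le
  rw [h3] at h2
  norm_num at h2

abbrev IsHubDart (d : (BC p m).Dart) : Prop := IsHub d.fst ∧ IsHub d.snd

def dartWinding (d : (BC p m).Dart) : ℤ :=
  if IsHubDart d then (if d.fst.1 + 1 = d.snd.1 then 1 else -1) else 0

lemma dartWinding_cast_zmod (d : (BC p m).Dart) :
    (dartWinding d : ZMod (2 * p + 1)) = d.snd.1 - d.fst.1 := by
  rcases adj_cases d.adj with ⟨hcopy, hside⟩ | ⟨hu, hv, hdir⟩
  · have : ¬ IsHubDart d := fun ⟨hu, hv⟩ => hside (by simp [side, hu, hv])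
    simp [dartWinding, this, hcopy]
  · by_cases hfwd : d.fst.1 + 1 = d.snd.1
    · rw [dartWinding, if_pos ⟨hu, hv⟩, if_pos hfwd, ← hfwd]
      push_cast
      ring
    · rw [dartWinding, if_pos ⟨hu, hv⟩, if_neg hfwd, ← hdir.resolve_left hfwd]
      push_cast
      ring

lemma dartWinding_cast_two (d : (BC p m).Dart) :
    (dartWinding d : ZMod 2) = 1 + (side d.snd - side d.fst) := by
  rcases adj_cases d.adj with ⟨-, hside⟩ | ⟨hu, hv, -⟩
  · have : ¬ IsHubDart d := fun ⟨hu, hv⟩ => hside (by simp [side, hu, hv])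
    simp only [dartWinding, this, if_false, Int.cast_zero]
    generalize side d.fst = a, side d.snd = b at hside ⊢
    revert a b
    decide
  · simp [dartWinding, side, hu, hv]

lemma abs_dartWinding_le (d : (BC p m).Dart) :
    |dartWinding d| ≤ if IsHubDart d then 1 else 0 := by
  unfold dartWinding
  split_ifs <;> simp

lemma exists_edge_eq_of_isHubDart {d : (BC p m).Dart} (hd : IsHubDart d) :
    ∃ i, d.edge = s(hub i, hub (i + 1)) := by
  obtain ⟨hu, hv⟩ := hd
  have hfst : d.fst = hub d.fst.1 := Prod.ext rfl hu
  have hsnd : d.snd = hub d.snd.1 := Prod.ext rfl hv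
  rcases adj_cases d.adj with ⟨-, hside⟩ | ⟨-, -, hfwd | hbwd⟩
  · exact absurd (by simp [side, hu, hv]) hside
  · exact ⟨d.fst.1, by rw [Dart.edge, hfst, hsnd, ← hfwd]; rfl⟩
  · exact ⟨d.snd.1, by rw [Dart.edge, hfst, hsnd, ← hbwd, Sym2.eq_swap]; rfl⟩

variable {u v : Vertex p m}

def winding (w : (BC p m).Walk u v) : ℤ := (w.darts.map dartWinding).sum

def hubDarts (w : (BC p m).Walk u v) : List (BC p m).Dart := w.darts.filter fun d => IsHubDart d

lemma winding_cast_zmod (w : (BC p m).Walk u v) :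
    (winding w : ZMod (2 * p + 1)) = v.1 - u.1 := by
  rw [winding, Int.cast_list_sum, List.map_map]
  exact w.sum_map_darts_eq_sub Prod.fst dartWinding_cast_zmod

lemma winding_cast_two (w : (BC p m).Walk u v) :
    (winding w : ZMod 2) = w.length + (side v - side u) := by
  rw [winding, Int.cast_list_sum, List.map_map,
    ← w.sum_map_darts_eq_sub side (f := fun d => side d.snd - side d.fst) fun _ => rfl]
  simp [Function.comp_def, dartWinding_cast_two, List.sum_map_add]

lemma two_mul_add_one_le_abs_winding (w : (BC p m).Walk u u) (hodd : Odd w.length) :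
    2 * p + 1 ≤ |winding w| := by
  have hdvd : ((2 * p + 1 : ℕ) : ℤ) ∣ winding w := by
    rw [← ZMod.intCast_zmod_eq_zero_iff_dvd, winding_cast_zmod, sub_self]
  have hne : winding w ≠ 0 := by
    intro h
    have := winding_cast_two w
    rw [h, sub_self, add_zero, Int.cast_zero, eq_comm, ZMod.natCast_eq_zero_iff_even] at this
    exact Nat.not_even_iff_odd.mpr hodd this
  exact_mod_cast Int.le_of_dvd (abs_pos.mpr hne) ((dvd_abs _ _).mpr hdvd)

lemma abs_winding_le_length_hubDarts (w : (BC p m).Walk u v) :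
    |winding w| ≤ (hubDarts w).length := by
  rw [winding, hubDarts]
  induction w.darts with
  | nil => simp
  | cons d l ih =>
    have hd := abs_dartWinding_le d
    rw [List.map_cons, List.sum_cons]
    refine (abs_add_le _ _).trans ?_
    by_cases hhub : IsHubDart d
    · rw [if_pos hhub] at hd
      rw [List.filter_cons_of_pos (by simpa using hhub), List.length_cons]
      push_cast
      linarith
    · rw [if_neg hhub] at hd
      rw [List.filter_cons_of_neg (by simpa using hhub)]
      linarith

lemma hubEdge_mem_edges {w : (BC p m).Walk u v} (hw : w.IsTrail)
    (hlen : 2 * p + 1 ≤ (hubDarts w).length) (i : ZMod (2 * p + 1)) :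
    s(hub i, hub (i + 1)) ∈ w.edges := by
  set E := ((hubDarts w).map Dart.edge).toFinset
  set H := (Finset.univ : Finset (ZMod (2 * p + 1))).image fun j => s(hub j, hub (j + 1))
  have hEH : E ⊆ H := by
    intro e he
    obtain ⟨d, hd, rfl⟩ := List.mem_map.mp (List.mem_toFinset.mp he)
    obtain ⟨j, hj⟩ := exists_edge_eq_of_isHubDart (by simpa using (List.mem_filter.mp hd).2)
    exact Finset.mem_image.mpr ⟨j, Finset.mem_univ _, hj.symm⟩
  have hsub : List.Sublist ((hubDarts w).map Dart.edge) w.edges := List.filter_sublist.map _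
  have hcard : H.card ≤ E.card := by
    rw [List.toFinset_card_of_nodup (hw.edges_nodup.sublist hsub), List.length_map]
    calc H.card ≤ Fintype.card (ZMod (2 * p + 1)) := Finset.card_image_le
      _ = 2 * p + 1 := ZMod.card _
      _ ≤ _ := hlen
  have hi : s(hub i, hub (i + 1)) ∈ E := by
    rw [Finset.eq_of_subset_of_card_le hEH hcard]
    exact Finset.mem_image_of_mem _ (Finset.mem_univ i)
  exact hsub.subset (List.mem_toFinset.mp hi)

lemma isHub_of_mem_edges (hp : 1 ≤ p) {w : (BC p m).Walk u u} (hc : w.IsCycle)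
    (hall : ∀ i, s(hub i, hub (i + 1)) ∈ w.edges) {x y : Vertex p m} (hxy : s(x, y) ∈ w.edges)
    (hx : IsHub x) : IsHub y := by
  have hx' : x = hub x.1 := Prod.ext rfl hx
  set i := x.1
  have hne : hub (m := m) (i + 1) ≠ hub (i - 1) := by
    intro h
    have h1 : i + 1 = i - 1 := congrArg Prod.fst h
    exact two_ne_zero_of_one_le hp (by linear_combination h1)
  have hnbr : w.toSubgraph.neighborSet x = {hub (i + 1), hub (i - 1)} := by
    refine (Set.eq_of_subset_of_ncard_le ?_ ?_ (Set.toFinite _)).symm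
    · have hsucc := hall i
      have hpred := hall (i - 1)
      rw [← hx'] at hsucc
      rw [sub_add_cancel, Sym2.eq_swap, ← hx'] at hpred
      rintro z (rfl | rfl)
      exacts [w.mem_edges_toSubgraph.mpr hsucc, w.mem_edges_toSubgraph.mpr hpred]
    · rw [Set.ncard_pair hne,
        hc.ncard_neighborSet_toSubgraph_eq_two (w.fst_mem_support_of_mem_edges hxy)]
  have hy : y ∈ w.toSubgraph.neighborSet x := w.mem_edges_toSubgraph.mpr hxy
  rw [hnbr] at hy
  rcases hy with rfl | rfl <;> rfl

lemma length_le_of_forall_isHub {w : (BC p m).Walk u u} (hc : w.IsCycle)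
    (hhub : ∀ x ∈ w.support, IsHub x) : w.length ≤ 2 * p + 1 := by
  have hnodup : (w.support.tail.map Prod.fst).Nodup := by
    refine hc.support_nodup.map_on fun x hx y hy hxy => Prod.ext hxy ?_
    rw [hhub x (List.mem_of_mem_tail hx), hhub y (List.mem_of_mem_tail hy)]
  have := hnodup.length_le_card
  rwa [List.length_map, List.length_tail, Walk.length_support, ZMod.card,
    Nat.add_sub_cancel] at this

theorem length_eq_of_isCycle_of_odd (hp : 1 ≤ p) {w : (BC p m).Walk u u} (hc : w.IsCycle)
    (hodd : Odd w.length) : w.length = 2 * p + 1 := by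
  have hwinding :=
    (two_mul_add_one_le_abs_winding w hodd).trans (abs_winding_le_length_hubDarts w)
  have hall := hubEdge_mem_edges hc.isTrail (by exact_mod_cast hwinding)
  have hhub := w.forall_mem_support_of_edges (fun _ _ hxy => isHub_of_mem_edges hp hc hall hxy)
    (w.fst_mem_support_of_mem_edges (hall 0)) rfl
  have hdarts : (hubDarts w).length ≤ w.length := w.length_darts ▸ List.length_filter_le _ _
  have := length_le_of_forall_isHub hc hhub
  omega

end BC

/-- `BC_{2p+1}(n)` has minimum degree `m+1 = n/(2(2p+1))`, is non-bipartite, and its only odd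
cycle length is `2p+1`; in particular it is `C_{2q+1}`-free for every `q ≠ p`. -/
theorem stmt18 (p m : ℕ) (hp : 1 ≤ p) :
    (∀ v, m + 1 ≤ ((BC p m).neighborSet v).ncard) ∧
    (∃ v, ((BC p m).neighborSet v).ncard = m + 1) ∧
    ¬ (BC p m).Colorable 2 ∧
    (∀ (x) (w : (BC p m).Walk x x), w.IsCycle → Odd w.length → w.length = 2 * p + 1) ∧
    (∀ q : ℕ, q ≠ p → ∀ (x) (w : (BC p m).Walk x x), w.IsCycle → w.length ≠ 2 * q + 1) := by
  refine ⟨BC.le_ncard_neighborSet, ⟨(0, Sum.inr 0), BC.ncard_neighborSet_inr 0 0⟩,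
    BC.not_colorable_two hp, fun _ _ hc hodd => BC.length_eq_of_isCycle_of_odd hp hc hodd, ?_⟩
  intro q hq _ w hc hlen
  have := BC.length_eq_of_isCycle_of_odd hp hc (hlen ▸ odd_two_mul_add_one q)
  omega
end
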